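/- arXiv:2304.12947 — 4 statements merged into one kernel-verified Lean document; each statement's English description precedes it below -/
import Mathlib

section
/- If X is a nominal renaming set (a set with a Fin(𝔸)-monoid action in which every element has some finite support), then every element x ∈ X has a least finite support, namely the intersection of all finite supports of x. -/
abbrev Atom := ℕ

/-- The monoid `Fin(𝔸)` of finite renamings, as a submonoid of `Function.End 𝔸`
(self-maps under composition). -/
def FinRen : Submonoid (Function.End Atom) where
  carrier := {ρ | ({a | ρ a ≠ a} : Set Atom).Finite}
  one_mem' := by
    have h : {a : Atom | (1 : Function.End Atom) a ≠ a} = ∅ := by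
      ext a
      simp only [Set.mem_setOf_eq, Set.mem_empty_iff_false, iff_false, not_not]
      rfl
    show ({a : Atom | (1 : Function.End Atom) a ≠ a} : Set Atom).Finite
    rw [h]; exact Set.finite_empty
  mul_mem' := by
    intro f g hf hg
    refine Set.Finite.subset (Set.Finite.union hf hg) ?_
    intro a ha
    simp only [Set.mem_setOf_eq, Set.mem_union] at *
    by_contra h
    push_neg at h
    exact ha (by show f (g a) = a; rw [h.2, h.1])

/-- `S` is a finite support of `x` in a `Fin(𝔸)`-set `X`: any two renamings
that agree on `S` act equally on `x`. -/
def RSupports {X : Type*} [MulAction FinRen X] (x : X) (S : Set Atom) : Prop :=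
  S.Finite ∧ ∀ ρ σ : FinRen,
    (∀ a ∈ S, (ρ : Function.End Atom) a = (σ : Function.End Atom) a) → ρ • x = σ • x

open Classical in
/-- Intersection of two supports is a support. -/
lemma RSupports.inter {X : Type*} [MulAction FinRen X] {x : X} {S₁ S₂ : Set Atom}
    (h₁ : RSupports x S₁) (h₂ : RSupports x S₂) : RSupports x (S₁ ∩ S₂) := by
  refine ⟨h₁.1.subset Set.inter_subset_left, ?_⟩
  intro ρ σ hagree
  -- choose N above all atoms moved by ρ or σ
  have hmoved : ({a | (ρ : Function.End Atom) a ≠ a} ∪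
      {a | (σ : Function.End Atom) a ≠ a} : Set Atom).Finite := ρ.2.union σ.2
  obtain ⟨b, hb⟩ := hmoved.bddAbove
  set N := b + 1 with hN
  have hbig : ∀ c : Atom, b < c →
      (ρ : Function.End Atom) c = c ∧ (σ : Function.End Atom) c = c := by
    intro c hc
    constructor
    · by_contra h
      exact absurd (hb (Set.mem_union_left _ h)) (not_le.2 hc)
    · by_contra h
      exact absurd (hb (Set.mem_union_right _ h)) (not_le.2 hc)
  -- the renaming π shifting S₁ \ S₂ up by N, identity elsewhere
  set f : Function.End Atom := fun a => if a ∈ S₁ ∧ a ∉ S₂ then a + N else a with hf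
  have hfmem : f ∈ FinRen := by
    refine h₁.1.subset ?_
    intro a ha
    simp only [Set.mem_setOf_eq, hf] at ha
    by_contra h
    rw [if_neg (fun hc => h hc.1)] at ha
    exact ha rfl
  set π : FinRen := ⟨f, hfmem⟩ with hπ
  -- π agrees with 1 on S₂, so π • x = x
  have hπx : π • x = x := by
    have := h₂.2 π 1 (by
      intro a ha
      show f a = a
      rw [hf]
      exact if_neg (fun hc => hc.2 ha))
    rw [this, one_smul]
  -- ρ * π and σ * π agree on S₁
  have hkey : (ρ * π) • x = (σ * π) • x := by
    refine h₁.2 _ _ ?_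
    intro a ha
    show (ρ : Function.End Atom) (f a) = (σ : Function.End Atom) (f a)
    by_cases hc : a ∈ S₁ ∧ a ∉ S₂
    · have hfa : f a = a + N := by rw [hf]; exact if_pos hc
      have hlt : b < a + N := hN ▸ Nat.lt_succ_of_le (Nat.le_add_left b a)
      rw [hfa, (hbig _ hlt).1, (hbig _ hlt).2]
    · have hfa : f a = a := by rw [hf]; exact if_neg hc
      have haS₂ : a ∈ S₂ := by
        by_contra h
        exact hc ⟨ha, h⟩
      rw [hfa]
      exact hagree a ⟨ha, haS₂⟩
  rw [mul_smul, mul_smul, hπx] at hkey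
  exact hkey

/-- in a nominal renaming set (every element has some finite support),
every element has a least finite support, namely the intersection of all its
finite supports. -/
theorem least_support_of_nominal_renaming_set
    (X : Type*) [MulAction FinRen X]
    (hnom : ∀ x : X, ∃ S : Set Atom, RSupports x S) (x : X) :
    RSupports x (⋂₀ {S | RSupports x S}) ∧
      ∀ S : Set Atom, RSupports x S → (⋂₀ {S | RSupports x S}) ⊆ S := by
  have hsub : ∀ S : Set Atom, RSupports x S → (⋂₀ {S | RSupports x S}) ⊆ S :=
    fun S hS => Set.sInter_subset_of_mem hS
  refine ⟨?_, hsub⟩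
  -- pick a support of minimal cardinality
  obtain ⟨S₀, hS₀⟩ := hnom x
  have hex : ∃ n : ℕ, ∃ S : Set Atom, RSupports x S ∧ S.ncard = n :=
    ⟨S₀.ncard, S₀, hS₀, rfl⟩
  classical
  obtain ⟨Sm, hSm, hSmcard⟩ := Nat.find_spec hex
  have hmin : ∀ S : Set Atom, RSupports x S → Sm ⊆ S := by
    intro S hS
    have hint : RSupports x (Sm ∩ S) := hSm.inter hS
    have hle : (Sm ∩ S).ncard ≤ Sm.ncard :=
      Set.ncard_le_ncard Set.inter_subset_left hSm.1
    have hge : Sm.ncard ≤ (Sm ∩ S).ncard := by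
      rw [hSmcard]
      exact Nat.find_min' hex ⟨Sm ∩ S, hint, rfl⟩
    have heq : Sm ∩ S = Sm :=
      Set.eq_of_subset_of_ncard_le Set.inter_subset_left hge hSm.1
    rw [← heq]
    exact Set.inter_subset_right
  have : (⋂₀ {S | RSupports x S}) = Sm :=
    Set.Subset.antisymm (Set.sInter_subset_of_mem hSm)
      (Set.subset_sInter (fun S hS => hmin S hS))
  rw [this]
  exact hSm
end

section
/- Let A be an automaton over states Q = J × 𝔸^{#m} with a Perm(𝔸)-equivariant transition relation, and let Ā over states J × 𝔸^m have transitions δ̄ = { ((j, ρ*p), ρ(a), (j', ρ*p')) : ((j,p), a, (j',p')) ∈ δ, ρ ∈ Fin(𝔸) }, initial states J_I × 𝔸^m and final states J_F × 𝔸^m (where I = J_I × 𝔸^{#m}, F = J_F × 𝔸^{#m}). Then the language of Ā is contained in the positive closure of the language of A: L(Ā) ⊆ { ρ*(w) : w ∈ L(A), ρ ∈ Fin(𝔸) }. -/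
/-- A finite renaming. -/
def IsRenaming (ρ : Atom → Atom) : Prop := ({a | ρ a ≠ a} : Set Atom).Finite

/-- A finite permutation. -/
def FinPermSupp (π : Equiv.Perm Atom) : Prop := ({a | π a ≠ a} : Set Atom).Finite

/-- `𝔸^{#m}`: tuples of `m` pairwise distinct atoms. -/
def DTuple (m : ℕ) : Type := {p : Fin m → Atom // Function.Injective p}

/-- Letterwise action of a permutation on a distinct tuple. -/
def permDT (π : Equiv.Perm Atom) {m : ℕ} (p : DTuple m) : DTuple m :=
  ⟨⇑π ∘ p.1, π.injective.comp p.2⟩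

/-- Acceptance of a word from a state. -/
def Accepts {Q : Type*} (δ : Q → Atom → Q → Prop) (F : Set Q) : Q → List Atom → Prop
  | q, [] => q ∈ F
  | q, a :: w => ∃ q', δ q a q' ∧ Accepts δ F q' w

/-- The language of the NOFA `A` with states `J × 𝔸^{#m}`, initial states
`J_I × 𝔸^{#m}` and final states `J_F × 𝔸^{#m}`. -/
def langA {J : Type} {m : ℕ}
    (δ : (J × DTuple m) → Atom → (J × DTuple m) → Prop)
    (J_I J_F : Set J) : Set (List Atom) :=
  {w | ∃ s : J × DTuple m, s.1 ∈ J_I ∧ Accepts δ {s' | s'.1 ∈ J_F} s w}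

/-- The transition relation of the positive-closure automaton `Ā` on states `J × 𝔸^m`. -/
def deltaBar {J : Type} {m : ℕ}
    (δ : (J × DTuple m) → Atom → (J × DTuple m) → Prop) :
    (J × (Fin m → Atom)) → Atom → (J × (Fin m → Atom)) → Prop :=
  fun s b s' => ∃ (p p' : DTuple m) (a : Atom) (ρ : Atom → Atom),
    IsRenaming ρ ∧ δ (s.1, p) a (s'.1, p') ∧
      (s.2 = fun k => ρ (p.1 k)) ∧ (s'.2 = fun k => ρ (p'.1 k)) ∧ b = ρ a

/-- The language of `Ā`. -/
def langABar {J : Type} {m : ℕ}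
    (δ : (J × DTuple m) → Atom → (J × DTuple m) → Prop)
    (J_I J_F : Set J) : Set (List Atom) :=
  {w | ∃ s : J × (Fin m → Atom), s.1 ∈ J_I ∧ Accepts (deltaBar δ) {s' | s'.1 ∈ J_F} s w}

/-- The positive closure of a language. -/
def posClosure (L : Set (List Atom)) : Set (List Atom) :=
  {v | ∃ w ∈ L, ∃ ρ : Atom → Atom, IsRenaming ρ ∧ v = w.map ρ}

lemma exists_perm_extend (f : Atom → Atom) (s : Finset Atom) (hf : Set.InjOn f s) :
    ∃ π : Equiv.Perm Atom, FinPermSupp π ∧ ∀ x ∈ s, π x = f x := by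
  classical
  set t : Finset Atom := s.image f with ht
  set u : Finset Atom := s ∪ t with hu
  have hcard : t.card = s.card := Finset.card_image_of_injOn hf
  have e0 : {x // x ∈ t \ s} ≃ {x // x ∈ s \ t} := by
    apply Fintype.equivOfCardEq
    simp only [Fintype.card_coe]
    rw [Finset.card_sdiff_comm hcard.symm]
  have hmem1 : ∀ x ∈ s, f x ∈ u := by
    intro x hx; exact Finset.mem_union_right _ (Finset.mem_image_of_mem f hx)
  have hmem2 : ∀ x, x ∈ s \ t → x ∈ u := fun x hx =>
    Finset.mem_union_left _ (Finset.mem_sdiff.mp hx).1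
  set g : {x // x ∈ u} → {x // x ∈ u} := fun x =>
    if hx : x.1 ∈ s then ⟨f x.1, hmem1 _ hx⟩
    else ⟨((e0 ⟨x.1, Finset.mem_sdiff.mpr
        ⟨(Finset.mem_union.mp x.2).resolve_left hx, hx⟩⟩).1 : Atom),
      hmem2 _ (e0 _).2⟩ with hg
  have hgs : ∀ (x : {x // x ∈ u}) (hx : x.1 ∈ s), (g x).1 = f x.1 := by
    intro x hx; simp only [hg, dif_pos hx]
  have hgnt : ∀ (x : {x // x ∈ u}), x.1 ∉ s → (g x).1 ∈ s \ t := by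
    intro x hx; simp only [hg, dif_neg hx]; exact (e0 _).2
  have hgn : ∀ (x y : {x // x ∈ u}) (hx : x.1 ∉ s) (hy : y.1 ∉ s),
      (g x).1 = (g y).1 → x.1 = y.1 := by
    intro x y hx hy h
    simp only [hg, dif_neg hx, dif_neg hy] at h
    have := e0.injective (Subtype.ext h)
    rw [Subtype.mk.injEq] at this
    exact this
  have hginj : Function.Injective g := by
    intro x y hxy
    have hxy' : (g x).1 = (g y).1 := congrArg Subtype.val hxy
    by_cases hx : x.1 ∈ s <;> by_cases hy : y.1 ∈ s
    · rw [hgs x hx, hgs y hy] at hxy'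
      exact Subtype.ext (hf hx hy hxy')
    · exfalso
      have h1 : (g x).1 ∈ t := by rw [hgs x hx]; exact Finset.mem_image_of_mem f hx
      have h2 := (Finset.mem_sdiff.mp (hgnt y hy)).2
      rw [hxy'] at h1
      exact h2 h1
    · exfalso
      have h1 : (g y).1 ∈ t := by rw [hgs y hy]; exact Finset.mem_image_of_mem f hy
      have h2 := (Finset.mem_sdiff.mp (hgnt x hx)).2
      rw [← hxy'] at h1
      exact h2 h1
    · exact Subtype.ext (hgn x y hx hy hxy')
  have hgbij : Function.Bijective g := Finite.injective_iff_bijective.mp hginj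
  set e : Equiv.Perm {x // x ∈ u} := Equiv.ofBijective g hgbij with he
  set π : Equiv.Perm Atom := e.extendDomain (Equiv.refl _) with hπ
  refine ⟨π, ?_, ?_⟩
  · apply Set.Finite.subset u.finite_toSet
    intro x hx
    by_contra hxu
    exact hx (e.extendDomain_apply_not_subtype (Equiv.refl _) hxu)
  · intro x hx
    have hxu : x ∈ u := Finset.mem_union_left _ hx
    have h1 := e.extendDomain_apply_subtype (Equiv.refl _) hxu
    rw [hπ, h1]
    have h2 : e ((Equiv.refl {x // x ∈ u}).symm ⟨x, hxu⟩) = g ⟨x, hxu⟩ := rfl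
    rw [h2]
    simp only [Equiv.refl_apply]
    exact hgs ⟨x, hxu⟩ hx

lemma key_lemma {J : Type} {m : ℕ}
    (δ : (J × DTuple m) → Atom → (J × DTuple m) → Prop) (J_F : Set J)
    (hδ : ∀ π : Equiv.Perm Atom, FinPermSupp π →
      ∀ (j : J) (p : DTuple m) (a : Atom) (j' : J) (p' : DTuple m),
        δ (j, p) a (j', p') → δ (j, permDT π p) (π a) (j', permDT π p')) :
    ∀ (v : List Atom) (j : J) (q : Fin m → Atom),
      Accepts (deltaBar δ) {s' | s'.1 ∈ J_F} (j, q) v →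
      ∃ (p : DTuple m) (w : List Atom) (ρ : Atom → Atom),
        IsRenaming ρ ∧ Accepts δ {s' | s'.1 ∈ J_F} (j, p) w ∧
        v = w.map ρ ∧ q = fun k => ρ (p.1 k) := by
  classical
  intro v
  induction v with
  | nil =>
    intro j q h
    refine ⟨⟨fun k => k.1, Fin.val_injective⟩, [], fun x => if hx : x < m then q ⟨x, hx⟩ else x,
      ?_, ?_, rfl, ?_⟩
    · apply Set.Finite.subset (Set.finite_Iio m)
      intro x hx
      simp only [Set.mem_setOf_eq] at hx
      by_contra hxm
      exact hx (dif_neg (by simpa using hxm))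
    · exact h
    · funext k
      simp only [dif_pos k.2]
  | cons b v ih =>
    intro j q h
    obtain ⟨⟨j', q'⟩, hstep, hacc⟩ := h
    obtain ⟨p, p', a, ρ₀, hρ₀, hδ₀, hq, hq', hb⟩ := hstep
    obtain ⟨pt, w, ρt, hρt, hw, hv', hqt⟩ := ih j' q' hacc
    -- a bound above all atoms of w and all atoms appearing in pt
    set T : Finset Atom := w.toFinset ∪ Finset.image pt.1 Finset.univ with hT
    set N : Atom := T.sup id + 1 with hN
    have hNT : ∀ x ∈ T, x < N := by
      intro x hx
      have h1 := Finset.le_sup (f := id) hx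
      simp only [id] at h1
      rw [hN]
      exact Nat.lt_succ_of_le h1
    have hNw : ∀ x ∈ w, x < N := fun x hx =>
      hNT x (Finset.mem_union_left _ (List.mem_toFinset.mpr hx))
    have hNpt : ∀ k, pt.1 k < N := fun k =>
      hNT _ (Finset.mem_union_right _ (Finset.mem_image_of_mem _ (Finset.mem_univ k)))
    -- the function f sending p' to pt and everything else up high
    set f : Atom → Atom := fun x =>
      if hx : ∃ k, p'.1 k = x then pt.1 hx.choose else x + N with hf
    have hfp' : ∀ k, f (p'.1 k) = pt.1 k := by
      intro k
      have hx : ∃ k', p'.1 k' = p'.1 k := ⟨k, rfl⟩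
      have := hx.choose_spec
      have hk : hx.choose = k := p'.2 this
      simp only [hf, dif_pos hx, hk]
    have hfhigh : ∀ x, (¬ ∃ k, p'.1 k = x) → f x = x + N := by
      intro x hx; simp only [hf, dif_neg hx]
    have hfinj : Function.Injective f := by
      intro x y hxy
      by_cases hx : ∃ k, p'.1 k = x <;> by_cases hy : ∃ k, p'.1 k = y
      · simp only [hf, dif_pos hx, dif_pos hy] at hxy
        have := pt.2 hxy
        rw [← hx.choose_spec, ← hy.choose_spec, this]
      · exfalso
        simp only [hf, dif_pos hx, dif_neg hy] at hxy
        have h1 := hNpt hx.choose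
        rw [hxy] at h1
        exact Nat.not_lt.mpr (Nat.le_add_left N y) h1
      · exfalso
        simp only [hf, dif_neg hx, dif_pos hy] at hxy
        have h1 := hNpt hy.choose
        rw [← hxy] at h1
        exact Nat.not_lt.mpr (Nat.le_add_left N x) h1
      · simp only [hf, dif_neg hx, dif_neg hy] at hxy
        exact Nat.add_right_cancel hxy
    set s : Finset Atom :=
      (Finset.image p'.1 Finset.univ ∪ Finset.image p.1 Finset.univ) ∪ {a} with hs
    obtain ⟨π, hπsupp, hπ⟩ := exists_perm_extend f s hfinj.injOn
    -- the renaming σ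
    set σ : Atom → Atom := fun x =>
      if x < N then ρt x else if x - N ∈ s then ρ₀ (x - N) else x with hσ
    have hσren : IsRenaming σ := by
      apply Set.Finite.subset (Set.Finite.union hρt (Set.Finite.image (· + N) s.finite_toSet))
      intro x hx
      simp only [Set.mem_setOf_eq] at hx
      by_cases h1 : x < N
      · left; simp only [Set.mem_setOf_eq]; simpa only [hσ, if_pos h1] using hx
      · by_cases h2 : x - N ∈ s
        · right
          exact ⟨x - N, h2, Nat.sub_add_cancel (Nat.le_of_not_lt h1)⟩
        · exfalso; apply hx; simp only [hσ, if_neg h1, if_neg h2]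
    -- σ ∘ π = ρ₀ on range p ∪ {a}
    have hσπ : ∀ y, ((∃ k, p.1 k = y) ∨ y = a) → σ (π y) = ρ₀ y := by
      intro y hy
      have hys : y ∈ s := by
        rcases hy with ⟨k, rfl⟩ | rfl
        · exact Finset.mem_union_left _ (Finset.mem_union_right _
            (Finset.mem_image_of_mem _ (Finset.mem_univ k)))
        · exact Finset.mem_union_right _ (Finset.mem_singleton_self y)
      rw [hπ y hys]
      by_cases hy' : ∃ k, p'.1 k = y
      · obtain ⟨k, rfl⟩ := hy'
        rw [hfp' k]
        have h1 : pt.1 k < N := hNpt k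
        have h2 : ρt (pt.1 k) = q' k := (congrFun hqt k).symm
        have h3 : q' k = ρ₀ (p'.1 k) := congrFun hq' k
        simp only [hσ, if_pos h1, h2, h3]
      · rw [hfhigh y hy']
        have h1 : ¬ (y + N < N) := Nat.not_lt.mpr (Nat.le_add_left N y)
        have h2 : y + N - N = y := Nat.add_sub_cancel _ _
        simp only [hσ, if_neg h1, h2, if_pos hys]
    -- π maps p' to pt
    have hπp' : permDT π p' = pt := by
      apply Subtype.ext
      funext k
      show π (p'.1 k) = pt.1 k
      rw [hπ _ (Finset.mem_union_left _ (Finset.mem_union_left _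
        (Finset.mem_image_of_mem _ (Finset.mem_univ k)))), hfp' k]
    refine ⟨permDT π p, π a :: w, σ, hσren, ?_, ?_, ?_⟩
    · refine ⟨(j', pt), ?_, hw⟩
      have := hδ π hπsupp j p a j' p' hδ₀
      rwa [hπp'] at this
    · show b :: v = (π a :: w).map σ
      simp only [List.map_cons]
      congr 1
      · rw [hσπ a (Or.inr rfl), hb]
      · rw [hv']
        apply List.map_congr_left
        intro x hx
        have h1 : x < N := hNw x hx
        simp only [hσ, if_pos h1]
    · funext k
      show q k = σ (π (p.1 k))
      rw [hσπ (p.1 k) (Or.inl ⟨k, rfl⟩)]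
      exact congrFun hq k

/-- for a `Perm(𝔸)`-equivariant automaton `A` on states `J × 𝔸^{#m}`,
the language of `Ā` is contained in the positive closure of the language of `A`. -/
theorem langABar_subset_posClosure {J : Type} [Finite J] {m : ℕ}
    (δ : (J × DTuple m) → Atom → (J × DTuple m) → Prop)
    (J_I J_F : Set J)
    (hδ : ∀ π : Equiv.Perm Atom, FinPermSupp π →
      ∀ (j : J) (p : DTuple m) (a : Atom) (j' : J) (p' : DTuple m),
        δ (j, p) a (j', p') → δ (j, permDT π p) (π a) (j', permDT π p')) :
    langABar δ J_I J_F ⊆ posClosure (langA δ J_I J_F) := by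
  intro v hv
  obtain ⟨⟨j, q⟩, hI, hacc⟩ := hv
  obtain ⟨p, w, ρ, hρ, haccA, hvw, -⟩ := key_lemma δ J_F hδ v j q hacc
  exact ⟨w, ⟨(j, p), hI, haccA⟩, ρ, hρ, hvw⟩
end

section
/- Every positive register automaton accepts a positive language: if all transition guards of a register automaton are positive boolean formulas (built from equations using only ∧, ∨, and true), then the accepted language is closed under letterwise application of arbitrary finite renamings. -/
/-- A language is positive if closed under letterwise application of all finite renamings. -/
def Positive (L : Set (List Atom)) : Prop :=
  ∀ ρ : Atom → Atom, IsRenaming ρ → ∀ w ∈ L, w.map ρ ∈ L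

/-- Terms occurring in the equations of a register automaton with `m` registers:
register contents before the step, the current input letter `•`, and register
contents after the step. -/
inductive RVal (m : ℕ)
  | before (k : Fin m)
  | input
  | after (k : Fin m)

/-- Boolean formulas over equations between such terms. -/
inductive RFormula (m : ℕ)
  | tt
  | ff
  | eq (x y : RVal m)
  | not (φ : RFormula m)
  | and (φ ψ : RFormula m)
  | or (φ ψ : RFormula m)

/-- Value of a term, given register assignments before and after and input `a`;
`none` represents the undefined register content `⊥`. -/
def RVal.sem {m : ℕ} (r r' : Fin m → Option Atom) (a : Atom) : RVal m → Option Atom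
  | .before k => r k
  | .input => some a
  | .after k => r' k

/-- Satisfaction of a formula: an equation `x = y` holds iff both sides are
defined and equal. -/
def RFormula.Sat {m : ℕ} (r r' : Fin m → Option Atom) (a : Atom) : RFormula m → Prop
  | .tt => True
  | .ff => False
  | .eq x y => ∃ v : Atom, x.sem r r' a = some v ∧ y.sem r r' a = some v
  | .not φ => ¬ RFormula.Sat r r' a φ
  | .and φ ψ => RFormula.Sat r r' a φ ∧ RFormula.Sat r r' a ψ
  | .or φ ψ => RFormula.Sat r r' a φ ∨ RFormula.Sat r r' a ψ

/-- Positive formulas: `true` or built from equations using only `∧` and `∨`. -/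
def RFormula.Pos {m : ℕ} : RFormula m → Prop
  | .tt => True
  | .eq _ _ => True
  | .and φ ψ => φ.Pos ∧ ψ.Pos
  | .or φ ψ => φ.Pos ∧ ψ.Pos
  | _ => False

/-- A move between configurations, consistent with some transition. -/
def Move {C : Type*} {m : ℕ} (δ : C → RFormula m → C → Prop) :
    (C × (Fin m → Option Atom)) → Atom → (C × (Fin m → Option Atom)) → Prop :=
  fun s a s' => ∃ φ, δ s.1 φ s'.1 ∧ RFormula.Sat s.2 s'.2 a φ

/-- Acceptance from a configuration. -/
def RAccepts {C : Type*} {m : ℕ} (δ : C → RFormula m → C → Prop) (F : Set C) :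
    (C × (Fin m → Option Atom)) → List Atom → Prop
  | s, [] => s.1 ∈ F
  | s, a :: w => ∃ s', Move δ s a s' ∧ RAccepts δ F s' w

/-- The language of the register automaton `(C, m, δ, I, F)`: words admitting an
accepting run starting from an initial control state with all registers empty. -/
def RLang {C : Type*} {m : ℕ} (δ : C → RFormula m → C → Prop) (I F : Set C) :
    Set (List Atom) :=
  {w | ∃ c₀ ∈ I, RAccepts δ F (c₀, fun _ => none) w}


lemma sat_map {m : ℕ} (ρ : Atom → Atom) {r r' : Fin m → Option Atom} {a : Atom}
    {φ : RFormula m} (hp : φ.Pos) (h : RFormula.Sat r r' a φ) :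
    RFormula.Sat (fun k => (r k).map ρ) (fun k => (r' k).map ρ) (ρ a) φ := by
  induction φ with
  | tt => trivial
  | ff => exact h.elim
  | eq x y =>
      obtain ⟨v, hx, hy⟩ := h
      refine ⟨ρ v, ?_, ?_⟩ <;> [cases x; cases y] <;>
        simp_all [RVal.sem, Option.map_eq_some_iff]
  | not φ ih => exact hp.elim
  | and φ ψ ih1 ih2 => exact ⟨ih1 hp.1 h.1, ih2 hp.2 h.2⟩
  | or φ ψ ih1 ih2 => exact h.elim (fun h => .inl (ih1 hp.1 h)) (fun h => .inr (ih2 hp.2 h))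

lemma accepts_map {C : Type} {m : ℕ} (δ : C → RFormula m → C → Prop) (F : Set C)
    (hpos : ∀ c φ c', δ c φ c' → RFormula.Pos φ) (ρ : Atom → Atom) :
    ∀ (w : List Atom) (s : C × (Fin m → Option Atom)), RAccepts δ F s w →
      RAccepts δ F (s.1, fun k => (s.2 k).map ρ) (w.map ρ)
  | [], s, h => h
  | a :: w, s, ⟨s', ⟨φ, hδ, hsat⟩, hacc⟩ =>
      ⟨(s'.1, fun k => (s'.2 k).map ρ), ⟨φ, hδ, sat_map ρ (hpos _ _ _ hδ) hsat⟩,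
        accepts_map δ F hpos ρ w s' hacc⟩

/-- every positive register automaton (all guards positive)
accepts a positive language. -/
theorem positive_register_automaton_lang_positive
    {C : Type} [Finite C] {m : ℕ} (δ : C → RFormula m → C → Prop) (I F : Set C)
    (hpos : ∀ c φ c', δ c φ c' → RFormula.Pos φ) :
    Positive (RLang δ I F) := by
  rintro ρ - w ⟨c₀, hc₀, hacc⟩
  refine ⟨c₀, hc₀, ?_⟩
  have := accepts_map δ F hpos ρ w (c₀, fun _ => none) hacc
  simpa using this
end

section
/- A presheaf P : ℂ → Set (ℂ ∈ {𝕀, 𝔽}, the category of finite subsets of 𝔸 with injective resp. all functions) is super-finitary if and only if there exists a componentwise surjective natural transformation ⨿_{i∈I} ℂ(S_i, −) → P with I a finite index set and each S_i a finite subset of 𝔸. -/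
/-- Morphisms of the category `ℂ` of finite subsets of `𝔸`: for `inj = true`
this is the category `𝕀` (injective functions), for `inj = false` the category
`𝔽` (all functions). -/
def FHom (inj : Bool) (S T : Finset Atom) : Type :=
  {f : {a // a ∈ S} → {a // a ∈ T} // inj = true → Function.Injective f}

/-- Identity morphism. -/
def FHom.id (inj : Bool) (S : Finset Atom) : FHom inj S S :=
  ⟨_root_.id, fun _ => Function.injective_id⟩

/-- Composition of morphisms. -/
def FHom.comp {inj : Bool} {S T U : Finset Atom}
    (g : FHom inj T U) (f : FHom inj S T) : FHom inj S U :=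
  ⟨g.1 ∘ f.1, fun h => (g.2 h).comp (f.2 h)⟩

/-- A (covariant, Set-valued) presheaf on `ℂ`. -/
structure FPresheaf (inj : Bool) where
  obj : Finset Atom → Type
  map : ∀ {S T : Finset Atom}, FHom inj S T → obj S → obj T
  map_id : ∀ (S : Finset Atom) (x : obj S), map (FHom.id inj S) x = x
  map_comp : ∀ {S T U : Finset Atom} (f : FHom inj S T) (g : FHom inj T U) (x : obj S),
    map (g.comp f) x = map g (map f x)

/-- A presheaf is super-finitary if some finite `S ⊆ 𝔸` generates it:
`P S'` is finite for all `S' ⊆ S`, and every element of every `P T` is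
the image of an element over some `S' ⊆ S`. -/
def SuperFinitary {inj : Bool} (P : FPresheaf inj) : Prop :=
  ∃ S : Finset Atom,
    (∀ S' ⊆ S, Finite (P.obj S')) ∧
    ∀ (T : Finset Atom) (x : P.obj T),
      ∃ S' ⊆ S, ∃ (ρ : FHom inj S' T) (y : P.obj S'), P.map ρ y = x

/-- a presheaf `P` on `ℂ ∈ {𝕀, 𝔽}` is super-finitary iff there is
a componentwise surjective natural transformation `⨿_{i∈I} ℂ(S_i, −) → P`
with `I` finite. -/
theorem superFinitary_iff_quotient_of_finite_coproduct_of_representables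
    {inj : Bool} (P : FPresheaf inj) :
    SuperFinitary P ↔
      ∃ (ι : Type) (_ : Finite ι) (Sf : ι → Finset Atom)
        (φ : ∀ T : Finset Atom, (Σ i : ι, FHom inj (Sf i) T) → P.obj T),
        (∀ (T U : Finset Atom) (τ : FHom inj T U) (x : Σ i : ι, FHom inj (Sf i) T),
            P.map τ (φ T x) = φ U ⟨x.1, τ.comp x.2⟩) ∧
        (∀ T : Finset Atom, Function.Surjective (φ T)) := by
  constructor
  · rintro ⟨S, hfin, hgen⟩
    refine ⟨(Σ S' : {S' : Finset Atom // S' ⊆ S}, P.obj S'.1), ?_,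
      fun i => i.1.1, fun T x => P.map x.2 x.1.2, ?_, ?_⟩
    · have : ∀ S' : {S' : Finset Atom // S' ⊆ S}, Finite (P.obj S'.1) :=
        fun S' => hfin S'.1 S'.2
      exact Finite.instSigma
    · intro T U τ x
      exact (P.map_comp x.2 τ x.1.2).symm
    · intro T x
      obtain ⟨S', hS', ρ, y, hy⟩ := hgen T x
      exact ⟨⟨⟨⟨S', hS'⟩, y⟩, ρ⟩, hy⟩
  · rintro ⟨ι, hι, Sf, φ, hnat, hsurj⟩
    have := Fintype.ofFinite ι
    refine ⟨Finset.univ.sup Sf, ?_, ?_⟩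
    · intro S' _
      have hfhom : ∀ i, Finite (FHom inj (Sf i) S') := fun i => Subtype.finite
      exact Finite.of_surjective (φ S') (hsurj S')
    · intro T x
      obtain ⟨⟨i, ρ⟩, hx⟩ := hsurj T x
      refine ⟨Sf i, Finset.le_sup (Finset.mem_univ i), ρ, φ (Sf i) ⟨i, FHom.id inj (Sf i)⟩, ?_⟩
      rw [hnat]
      have : ρ.comp (FHom.id inj (Sf i)) = ρ := rfl
      rw [this, hx]
end
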